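/- arXiv:2310.05049 — 4 statements merged into one kernel-verified Lean document; each statement's English description precedes it below -/
import Mathlib

section
/- In the finite two-stage setup with Q-functions and value functions defined by backward induction, for each stage k the identity E[ V_{k+1}(L_{k+1}) + ( Q_k(L_k, g_k^{opt}(L_k)) − Q_k(L_k, A_k) ) | L_k ] = V_k(L_k) holds almost surely, where g_k^{opt}(L_k) ∈ argmax over a of Q_k(L_k, a) and V_{K+1} := Y. -/
/-!
Within the stratum `L = l`, the regret-corrected outcome is `Q l (g l) + (W - Q l A)`, and
`Q l a` is the mean of `W` on each sub-stratum `A = a`, so the centred term `W - Q l A` has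
conditional mean zero. What is left is the constant `Q l (g l)`, which is `V l` because `g l`
attains the maximum.
-/

open scoped Classical

/-- Conditional expectation of `f` given the event `E` on a finite probability
space with weight function `p`. -/
noncomputable def cexp {Ω : Type*} [Fintype Ω] (p : Ω → ℝ) (f : Ω → ℝ) (E : Ω → Prop) : ℝ :=
  (∑ ω, if E ω then p ω * f ω else 0) / (∑ ω, if E ω then p ω else 0)

open Finset

section cexp

variable {Ω : Type*} [Fintype Ω] (p : Ω → ℝ)

theorem cexp_eq_iff {f : Ω → ℝ} {E : Ω → Prop} {c : ℝ}
    (hE : (∑ ω, if E ω then p ω else 0) ≠ 0) :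
    cexp p f E = c ↔ (∑ ω, if E ω then p ω * (f ω - c) else 0) = 0 := by
  have hsplit : (∑ ω, if E ω then p ω * (f ω - c) else 0)
      = (∑ ω, if E ω then p ω * f ω else 0) - c * ∑ ω, if E ω then p ω else 0 := by
    rw [mul_sum, ← sum_sub_distrib]
    exact sum_congr rfl fun ω _ => by split_ifs <;> ring
  rw [cexp, hsplit, div_eq_iff hE, sub_eq_zero]

theorem sum_ite_eq_sum_sum_ite_and {T : Type*} [Fintype T] (E : Ω → Prop) (A : Ω → T)
    (u : Ω → ℝ) :
    (∑ ω, if E ω then u ω else 0) = ∑ a, ∑ ω, if E ω ∧ A ω = a then u ω else 0 := by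
  rw [sum_comm]
  refine sum_congr rfl fun ω _ => ?_
  by_cases hE : E ω <;> simp [hE]

theorem sum_ite_mul_sub_fiber_cexp_eq_zero {T : Type*} [Fintype T] {E : Ω → Prop} {A : Ω → T}
    {f : Ω → ℝ} {q : T → ℝ} (hq : ∀ a, q a = cexp p f (fun ω => E ω ∧ A ω = a))
    (hpos : ∀ a, (∑ ω, if E ω ∧ A ω = a then p ω else 0) ≠ 0) :
    (∑ ω, if E ω then p ω * (f ω - q (A ω)) else 0) = 0 := by
  rw [sum_ite_eq_sum_sum_ite_and E A]
  refine sum_eq_zero fun a _ => ?_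
  have hfiber : (∑ ω, if E ω ∧ A ω = a then p ω * (f ω - q a) else 0) = 0 := by
    -- `convert` only reconciles the `Decidable` instances of the event `E ω ∧ A ω = a`
    convert (cexp_eq_iff p (by convert hpos a)).1 (hq a).symm
  refine (sum_congr rfl fun ω _ => ?_).trans hfiber
  split_ifs with h
  · rw [h.2]
  · rfl

end cexp

theorem ciSup_eq_of_forall_le_apply {ι α : Type*} [ConditionallyCompleteLattice α] {f : ι → α}
    (i : ι) (h : ∀ j, f j ≤ f i) :
    ⨆ j, f j = f i :=
  have : Nonempty ι := ⟨i⟩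
  le_antisymm (ciSup_le h) (le_ciSup ⟨f i, Set.forall_mem_range.2 h⟩ i)

theorem stmt_6_general {Ω H T : Type*} [Fintype Ω] [Fintype T]
    (p : Ω → ℝ)
    (L : Ω → H) (A : Ω → T) (W : Ω → ℝ)
    (Q : H → T → ℝ)
    (hQ : ∀ l a, Q l a = cexp p W (fun ω => L ω = l ∧ A ω = a))
    (V : H → ℝ) (hV : ∀ l, V l = ⨆ a, Q l a)
    (g : H → T) (hg : ∀ l a, Q l a ≤ Q l (g l)) :
    ∀ l : H, (∀ a : T, 0 < ∑ ω, if L ω = l ∧ A ω = a then p ω else 0) →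
      cexp p (fun ω => W ω + (Q (L ω) (g (L ω)) - Q (L ω) (A ω)))
        (fun ω => L ω = l) = V l := by
  intro l hpos
  have hmass : (∑ ω, if L ω = l then p ω else 0) ≠ 0 := by
    rw [sum_ite_eq_sum_sum_ite_and _ A]
    exact (sum_pos (fun a _ => hpos a) ⟨g l, mem_univ _⟩).ne'
  rw [hV, ciSup_eq_of_forall_le_apply (g l) (hg l), cexp_eq_iff p hmass]
  calc (∑ ω, if L ω = l then
          p ω * (W ω + (Q (L ω) (g (L ω)) - Q (L ω) (A ω)) - Q l (g l)) else 0)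
      = ∑ ω, if L ω = l then p ω * (W ω - Q l (A ω)) else 0 :=
        sum_congr rfl fun ω _ => by
          split_ifs with h
          · rw [h]
            ring
          · rfl
    _ = 0 := sum_ite_mul_sub_fiber_cexp_eq_zero p (hQ l) fun a => (hpos a).ne'

theorem stmt_6 {Ω H T : Type*} [Fintype Ω] [Fintype T] [Nonempty T]
    (p : Ω → ℝ) (hp0 : ∀ ω, 0 ≤ p ω) (hp1 : ∑ ω, p ω = 1)
    (L : Ω → H) (A : Ω → T) (W : Ω → ℝ)
    (Q : H → T → ℝ)
    (hQ : ∀ l a, Q l a = cexp p W (fun ω => L ω = l ∧ A ω = a))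
    (V : H → ℝ) (hV : ∀ l, V l = ⨆ a, Q l a)
    (g : H → T) (hg : ∀ l a, Q l a ≤ Q l (g l)) :
    ∀ l : H, (∀ a : T, 0 < ∑ ω, if L ω = l ∧ A ω = a then p ω else 0) →
      cexp p (fun ω => W ω + (Q (L ω) (g (L ω)) - Q (L ω) (A ω)))
        (fun ω => L ω = l) = V l :=
  stmt_6_general p L A W Q hQ V hV g hg
end

section
/- Tower-type identity for the regret decomposition: in the finite multi-stage setup, V_1(L_1) = E[ Y + Σ_{k=1}^{K} ( Q_k(L_k, g_k^{opt}(L_k)) − Q_k(L_k, A_k) ) | L_1 ] almost surely, i.e., the first-stage value function equals the conditional expectation of the observed outcome plus the accumulated stagewise regrets. -/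
/-!
Write `∫_E f` for `∑_{ω ∈ E} p ω f ω` and say that `f` and `g` agree in conditional expectation
given `φ` when `∫_{φ = x} f = ∫_{φ = x} g` for every `x`. This relation is preserved under
passing to a coarser `ψ` (the tower property) and under adding a common function.
Let `F_k = Y + ∑_{j > k} regret_j`. Backward induction shows `F_k ≈ Q_k(L_k, A_k)` given
`(L_k, A_k)`: at the last stage this is the definition of `Q_K`; otherwise, adding `regret_{k+1}`
turns the statement for `k + 1` into `F_k ≈ V_{k+1}(L_{k+1})` given `L_{k+1}`, because
`Q_{k+1}(l, a) + regret_{k+1}(l, a) = Q_{k+1}(l, g_{k+1} l) = V_{k+1}(l)`; since `(L_k, A_k)` is a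
function of `L_{k+1}`, the tower property and the definition of `Q_k` give the claim for `k`.
Adding `regret_1` once more yields `Y + ∑_k regret_k ≈ V_1(L_1)` given `L_1`.
-/

open scoped Classical

section FiniteExpectation

open Finset

variable {Ω X : Type*} [Fintype Ω] {p : Ω → ℝ}

noncomputable def wsum (p : Ω → ℝ) (E : Ω → Prop) (f : Ω → ℝ) : ℝ :=
  ∑ ω with E ω, p ω * f ω

noncomputable def mass (p : Ω → ℝ) (E : Ω → Prop) : ℝ :=
  ∑ ω with E ω, p ω

lemma cexp_eq_wsum_div (p f : Ω → ℝ) (E : Ω → Prop) : cexp p f E = wsum p E f / mass p E := by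
  simp only [cexp, wsum, mass, sum_filter]

lemma wsum_eq_zero_of_mass_eq_zero (hp : ∀ ω, 0 ≤ p ω) {E : Ω → Prop} (f : Ω → ℝ)
    (h : mass p E = 0) : wsum p E f = 0 := by
  rw [mass, sum_eq_zero_iff_of_nonneg fun ω _ => hp ω] at h
  exact sum_eq_zero fun ω hω => by rw [h ω hω, zero_mul]

lemma cexp_mul_mass (hp : ∀ ω, 0 ≤ p ω) (f : Ω → ℝ) (E : Ω → Prop) :
    cexp p f E * mass p E = wsum p E f := by
  rw [cexp_eq_wsum_div]
  rcases eq_or_ne (mass p E) 0 with h | h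
  · rw [h, mul_zero, wsum_eq_zero_of_mass_eq_zero hp f h]
  · exact div_mul_cancel₀ _ h

lemma wsum_add (E : Ω → Prop) (f g : Ω → ℝ) :
    wsum p E (fun ω => f ω + g ω) = wsum p E f + wsum p E g := by
  simp only [wsum, mul_add, sum_add_distrib]

lemma wsum_fiber_comp (φ : Ω → X) (c : X → ℝ) (x : X) :
    wsum p (φ · = x) (fun ω => c (φ ω)) = c x * mass p (φ · = x) := by
  rw [wsum, mass, mul_sum]
  refine sum_congr rfl fun ω hω => ?_
  rw [(mem_filter.1 hω).2, mul_comm]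

def CondExpEq (p : Ω → ℝ) (φ : Ω → X) (f g : Ω → ℝ) : Prop :=
  ∀ x, wsum p (φ · = x) f = wsum p (φ · = x) g

namespace CondExpEq

variable {Z : Type*} {φ : Ω → X} {f g : Ω → ℝ}

lemma trans {h : Ω → ℝ} (hfg : CondExpEq p φ f g) (hgh : CondExpEq p φ g h) :
    CondExpEq p φ f h :=
  fun x => (hfg x).trans (hgh x)

lemma add_right (hfg : CondExpEq p φ f g) (u : Ω → ℝ) :
    CondExpEq p φ (fun ω => f ω + u ω) (fun ω => g ω + u ω) :=
  fun x => by rw [wsum_add, wsum_add, hfg x]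

lemma of_coarser {ψ : Ω → Z} (hfg : CondExpEq p φ f g)
    (hψ : ∀ ω ω', φ ω = φ ω' → ψ ω = ψ ω') : CondExpEq p ψ f g := by
  have split : ∀ (z : Z) (u : Ω → ℝ),
      wsum p (ψ · = z) u = ∑ x ∈ (univ.filter (ψ · = z)).image φ, wsum p (φ · = x) u := by
    intro z u
    rw [wsum, ← sum_fiberwise_of_maps_to fun ω hω => mem_image_of_mem φ hω]
    refine sum_congr rfl fun x hx => ?_
    obtain ⟨ω, hω, rfl⟩ := mem_image.1 hx
    rw [wsum, filter_filter]
    refine sum_congr (filter_congr fun ω' _ => ?_) fun _ _ => rfl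
    exact ⟨And.right, fun h => ⟨(hψ ω' ω h).trans (by simpa using hω), h⟩⟩
  intro z
  rw [split, split]
  exact sum_congr rfl fun x _ => hfg x

lemma of_eq_cexp (hp : ∀ ω, 0 ≤ p ω) {c : X → ℝ} (hc : ∀ x, c x = cexp p f (φ · = x)) :
    CondExpEq p φ f (fun ω => c (φ ω)) :=
  fun x => by rw [wsum_fiber_comp, hc, cexp_mul_mass hp]

end CondExpEq

end FiniteExpectation

section Regret

open Finset

def regret {H T : Type*} (Q : H → T → ℝ) (g : H → T) (l : H) (a : T) : ℝ :=
  Q l (g l) - Q l a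

lemma CondExpEq.add_regret {Ω H T : Type*} [Fintype Ω] {p : Ω → ℝ} {L : Ω → H} {A : Ω → T}
    {f : Ω → ℝ} {Q : H → T → ℝ} {V : H → ℝ} {g : H → T} (hVg : ∀ l, V l = Q l (g l))
    (h : CondExpEq p (fun ω => (L ω, A ω)) f (fun ω => Q (L ω) (A ω))) :
    CondExpEq p L (fun ω => f ω + regret Q g (L ω) (A ω)) (fun ω => V (L ω)) := by
  have hL := (h.of_coarser (ψ := L) fun _ _ e => congrArg Prod.fst e).add_right
    fun ω => regret Q g (L ω) (A ω)
  simpa only [regret, hVg, add_sub_cancel] using hL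

theorem condExpEq_regret_tail {Ω H T : Type*} [Fintype Ω] {K : ℕ} {p : Ω → ℝ}
    (hp : ∀ ω, 0 ≤ p ω) (L : Fin K → Ω → H) (A : Fin K → Ω → T) (Y : Ω → ℝ)
    (hnest : ∀ (k : Fin K) (h : k.1 + 1 < K) (ω ω' : Ω),
      L ⟨k.1 + 1, h⟩ ω = L ⟨k.1 + 1, h⟩ ω' → L k ω = L k ω' ∧ A k ω = A k ω')
    (Q : Fin K → H → T → ℝ) (V : Fin K → H → ℝ) (g : Fin K → H → T)
    (hQlast : ∀ (k : Fin K), k.1 + 1 = K → ∀ (l : H) (a : T),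
      Q k l a = cexp p Y (fun ω => L k ω = l ∧ A k ω = a))
    (hQ : ∀ (k : Fin K) (h : k.1 + 1 < K) (l : H) (a : T),
      Q k l a = cexp p (fun ω => V ⟨k.1 + 1, h⟩ (L ⟨k.1 + 1, h⟩ ω))
        (fun ω => L k ω = l ∧ A k ω = a))
    (hVg : ∀ k l, V k l = Q k l (g k l)) (k : Fin K) :
    CondExpEq p (fun ω => (L k ω, A k ω))
      (fun ω => Y ω + ∑ j ∈ Ioi k, regret (Q j) (g j) (L j ω) (A j ω))
      (fun ω => Q k (L k ω) (A k ω)) := by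
  induction k using WellFoundedGT.induction with
  | _ k ih =>
  by_cases hk : k.1 + 1 < K
  · set k' : Fin K := ⟨k.1 + 1, hk⟩
    have hIoi : Ioi k = Ici k' := by
      ext j
      simp only [mem_Ioi, mem_Ici, Fin.lt_def, Fin.le_def, k']
      omega
    have hnext := (ih k' (Fin.lt_def.2 (Nat.lt_succ_self _))).add_regret (hVg k')
    simp only [add_assoc, sum_Ioi_add_eq_sum_Ici, ← hIoi] at hnext
    refine (hnext.of_coarser fun ω ω' e => ?_).trans
      (CondExpEq.of_eq_cexp hp (c := fun x : H × T => Q k x.1 x.2) fun x => by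
        simpa only [Prod.ext_iff] using hQ k hk x.1 x.2)
    obtain ⟨hL, hA⟩ := hnest k hk ω ω' e
    rw [hL, hA]
  · have hlast : Ioi k = ∅ := Ioi_eq_empty.2 fun j _ => Fin.le_def.2 (by omega)
    simp only [hlast, sum_empty, add_zero]
    exact CondExpEq.of_eq_cexp hp (c := fun x : H × T => Q k x.1 x.2) fun x => by
      simpa only [Prod.ext_iff] using hQlast k (by omega) x.1 x.2

end Regret

theorem stmt_7 {Ω H T : Type*} [Fintype Ω] [Nonempty T]
    (K : ℕ) (hK : 1 ≤ K)
    (p : Ω → ℝ) (hp0 : ∀ ω, 0 < p ω)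
    (L : Fin K → Ω → H) (A : Fin K → Ω → T) (Y : Ω → ℝ)
    (hnest : ∀ (k : Fin K) (h : k.1 + 1 < K) (ω ω' : Ω),
      L ⟨k.1 + 1, h⟩ ω = L ⟨k.1 + 1, h⟩ ω' → L k ω = L k ω' ∧ A k ω = A k ω')
    (Q : Fin K → H → T → ℝ) (V : Fin K → H → ℝ)
    (hQlast : ∀ (l : H) (a : T), Q ⟨K - 1, by omega⟩ l a =
      cexp p Y (fun ω => L ⟨K - 1, by omega⟩ ω = l ∧ A ⟨K - 1, by omega⟩ ω = a))
    (hQ : ∀ (k : Fin K) (h : k.1 + 1 < K) (l : H) (a : T),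
      Q k l a = cexp p (fun ω => V ⟨k.1 + 1, h⟩ (L ⟨k.1 + 1, h⟩ ω))
        (fun ω => L k ω = l ∧ A k ω = a))
    (hV : ∀ (k : Fin K) (l : H), V k l = ⨆ a, Q k l a)
    (g : Fin K → H → T) (hg : ∀ (k : Fin K) (l : H) (a : T), Q k l a ≤ Q k l (g k l)) :
    ∀ l1 : H, (0 < ∑ ω, if L ⟨0, by omega⟩ ω = l1 then p ω else 0) →
      cexp p
        (fun ω => Y ω + ∑ k : Fin K, (Q k (L k ω) (g k (L k ω)) - Q k (L k ω) (A k ω)))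
        (fun ω => L ⟨0, by omega⟩ ω = l1) = V ⟨0, by omega⟩ l1 := by
  intro l1 hl1
  have hVg : ∀ k l, V k l = Q k l (g k l) := fun k l =>
    (hV k l).trans (ciSup_eq_of_forall_le_of_forall_lt_exists_gt (hg k l) fun _ hw => ⟨g k l, hw⟩)
  have hQlast' : ∀ (k : Fin K), k.1 + 1 = K → ∀ (l : H) (a : T),
      Q k l a = cexp p Y (fun ω => L k ω = l ∧ A k ω = a) := by
    rintro ⟨k, -⟩ (hk : k + 1 = K)
    obtain rfl : k = K - 1 := by omega
    exact hQlast
  set k₀ : Fin K := ⟨0, by omega⟩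
  have hfirst := (condExpEq_regret_tail (fun ω => (hp0 ω).le) L A Y hnest Q V g hQlast' hQ hVg
    k₀).add_regret (hVg k₀) l1
  have hall : Finset.Ici k₀ = Finset.univ :=
    Finset.eq_univ_of_forall fun j => Finset.mem_Ici.2 (Fin.le_def.2 j.1.zero_le)
  simp only [add_assoc, Finset.sum_Ioi_add_eq_sum_Ici, hall, wsum_fiber_comp] at hfirst
  have hmass : mass p (L k₀ · = l1) ≠ 0 := by
    rw [mass, Finset.sum_filter]
    exact hl1.ne'
  rw [cexp_eq_wsum_div, div_eq_iff hmass]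
  exact hfirst
end

section
/- Double robustness of the AIPW functional (finite version, correct propensity score): with finite probability space, treatment A with positivity π(a|ℓ) > 0, true outcome function m(ℓ,a) = E[Y | L = ℓ, A = a], and an arbitrary 'working model' Q̃ : L-values × A → ℝ, the augmented estimator satisfies E[ 1{A = a}/π(a|L) · Y + (1 − 1{A = a}/π(a|L)) · Q̃(L, a) ] = E[ m(L, a) ] for every fixed a, regardless of the choice of Q̃. -/
open scoped Classical

/-!
Split the expectation along the strata `L = l`. The inverse-propensity weight `1{A = a} / π(a|l)`
has conditional mean `1` in every stratum, so the augmentation term `(1 - 1{A = a}/π) Q̃(L, a)`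
has mean zero whatever `Q̃` is. In the remaining term `1{A = a}/π(a|L) · Y`, the tower property
replaces `Y` by `m(L, a)`, and the same conditional-mean-one identity removes the weight.
-/

section

variable {Ω 𝓛 𝓐 : Type*} [Fintype Ω]

theorem sum_ite_mul_eq_mul_cexp {p : Ω → ℝ} (hp0 : ∀ ω, 0 ≤ p ω) (f : Ω → ℝ) (E : Ω → Prop)
    [DecidablePred E] :
    ∑ ω, (if E ω then p ω * f ω else 0) = (∑ ω, if E ω then p ω else 0) * cexp p f E := by
  by_cases hmass : (∑ ω, if E ω then p ω else 0) = 0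
  · have hp : ∀ ω, E ω → p ω = 0 := fun ω hω => by
      have := (Finset.sum_eq_zero_iff_of_nonneg fun ω _ => by
        split_ifs <;> simp [hp0 ω]).mp hmass ω (Finset.mem_univ ω)
      simpa [hω] using this
    rw [hmass, zero_mul]
    exact Finset.sum_eq_zero fun ω _ => by split_ifs with hω <;> simp [hp ω, hω]
  · rw [cexp]
    convert (mul_div_cancel₀ _ hmass).symm

theorem sum_eq_sum_of_forall_fiber (L : Ω → 𝓛) {f g : Ω → ℝ}
    (h : ∀ l, ∑ ω, (if L ω = l then f ω else 0) = ∑ ω, if L ω = l then g ω else 0) :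
    ∑ ω, f ω = ∑ ω, g ω := by
  have hmaps : ∀ ω ∈ Finset.univ, L ω ∈ Finset.univ.image L :=
    fun ω _ => Finset.mem_image_of_mem L (Finset.mem_univ ω)
  rw [← Finset.sum_fiberwise_of_maps_to hmaps f, ← Finset.sum_fiberwise_of_maps_to hmaps g]
  refine Finset.sum_congr rfl fun l _ => ?_
  simpa only [Finset.sum_filter] using h l

variable (p : Ω → ℝ) (L : Ω → 𝓛) (A : Ω → 𝓐) (a : 𝓐)

theorem sum_ipw_mul_eq_sum {π : 𝓛 → ℝ} (hπ0 : ∀ l, π l ≠ 0)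
    (hπ : ∀ l, (∑ ω, if L ω = l then p ω else 0) * π l
        = ∑ ω, if L ω = l ∧ A ω = a then p ω else 0)
    (g : 𝓛 → ℝ) :
    ∑ ω, p ω * ((if A ω = a then 1 else 0) / π (L ω) * g (L ω)) = ∑ ω, p ω * g (L ω) := by
  refine sum_eq_sum_of_forall_fiber L fun l => ?_
  calc ∑ ω, (if L ω = l then p ω * ((if A ω = a then 1 else 0) / π (L ω) * g (L ω)) else 0)
      = (∑ ω, if L ω = l ∧ A ω = a then p ω else 0) * (g l / π l) := by
        rw [Finset.sum_mul]
        refine Finset.sum_congr rfl fun ω _ => ?_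
        by_cases hL : L ω = l <;> by_cases hA : A ω = a <;>
          simp only [hL, hA, if_true, if_false, and_true, and_false] <;> ring
    _ = (∑ ω, if L ω = l then p ω else 0) * g l := by
        rw [← hπ l]; field_simp [hπ0 l]
    _ = ∑ ω, if L ω = l then p ω * g (L ω) else 0 := by
        rw [Finset.sum_mul]
        exact Finset.sum_congr rfl fun ω _ => by split_ifs with hL <;> simp [hL]

theorem sum_ipw_mul_eq_sum_ipw_mul_of_eq_cexp {Y : Ω → ℝ} (hp0 : ∀ ω, 0 ≤ p ω) {m : 𝓛 → ℝ}
    (hm : ∀ l, 0 < (∑ ω, if L ω = l ∧ A ω = a then p ω else 0) →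
      m l = cexp p Y (fun ω => L ω = l ∧ A ω = a))
    (w : 𝓛 → ℝ) :
    ∑ ω, p ω * ((if A ω = a then 1 else 0) / w (L ω) * Y ω)
      = ∑ ω, p ω * ((if A ω = a then 1 else 0) / w (L ω) * m (L ω)) := by
  refine sum_eq_sum_of_forall_fiber L fun l => ?_
  have hstratum : ∑ ω, (if L ω = l ∧ A ω = a then p ω * Y ω else 0)
      = (∑ ω, if L ω = l ∧ A ω = a then p ω else 0) * m l := by
    rw [sum_ite_mul_eq_mul_cexp hp0]
    rcases (Finset.sum_nonneg fun ω _ => by split_ifs <;> simp [hp0 ω] :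
      0 ≤ ∑ ω, if L ω = l ∧ A ω = a then p ω else 0).eq_or_lt with hmass | hmass
    · rw [← hmass, zero_mul, zero_mul]
    · rw [hm l hmass]
  calc ∑ ω, (if L ω = l then p ω * ((if A ω = a then 1 else 0) / w (L ω) * Y ω) else 0)
      = (∑ ω, if L ω = l ∧ A ω = a then p ω * Y ω else 0) / w l := by
        rw [Finset.sum_div]
        refine Finset.sum_congr rfl fun ω _ => ?_
        by_cases hL : L ω = l <;> by_cases hA : A ω = a <;>
          simp only [hL, hA, if_true, if_false, and_true, and_false] <;> ring
    _ = (∑ ω, if L ω = l ∧ A ω = a then p ω else 0) * m l / w l := by rw [hstratum]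
    _ = ∑ ω, (if L ω = l then p ω * ((if A ω = a then 1 else 0) / w (L ω) * m (L ω)) else 0) := by
        rw [Finset.sum_mul, Finset.sum_div]
        refine Finset.sum_congr rfl fun ω _ => ?_
        by_cases hL : L ω = l <;> by_cases hA : A ω = a <;>
          simp only [hL, hA, if_true, if_false, and_true, and_false] <;> ring

end

theorem stmt_9_general {Ω 𝓛 𝓐 : Type*} [Fintype Ω]
    (p : Ω → ℝ) (hp0 : ∀ ω, 0 ≤ p ω)
    (L : Ω → 𝓛) (A : Ω → 𝓐) (Y : Ω → ℝ)
    (π : 𝓐 → 𝓛 → ℝ) (hπpos : ∀ a l, 0 < π a l)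
    (hπ : ∀ a l, (∑ ω, if L ω = l then p ω else 0) * π a l
        = ∑ ω, if L ω = l ∧ A ω = a then p ω else 0)
    (m : 𝓛 → 𝓐 → ℝ)
    (hm : ∀ l a, 0 < (∑ ω, if L ω = l ∧ A ω = a then p ω else 0) →
      m l a = cexp p Y (fun ω => L ω = l ∧ A ω = a))
    (Qt : 𝓛 → 𝓐 → ℝ) :
    ∀ a : 𝓐,
      ∑ ω, p ω * ((if A ω = a then 1 else 0) / π a (L ω) * Y ω
        + (1 - (if A ω = a then 1 else 0) / π a (L ω)) * Qt (L ω) a)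
      = ∑ ω, p ω * m (L ω) a := by
  intro a
  have hπ0 : ∀ l, π a l ≠ 0 := fun l => (hπpos a l).ne'
  have hbalance := sum_ipw_mul_eq_sum p L A a hπ0 (hπ a)
  calc _ = ∑ ω, p ω * ((if A ω = a then 1 else 0) / π a (L ω) * Y ω)
          + (∑ ω, p ω * Qt (L ω) a
            - ∑ ω, p ω * ((if A ω = a then 1 else 0) / π a (L ω) * Qt (L ω) a)) := by
        rw [← Finset.sum_sub_distrib, ← Finset.sum_add_distrib]
        exact Finset.sum_congr rfl fun ω _ => by ring
    _ = ∑ ω, p ω * ((if A ω = a then 1 else 0) / π a (L ω) * m (L ω) a) := by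
        rw [hbalance (Qt · a), sub_self, add_zero,
          sum_ipw_mul_eq_sum_ipw_mul_of_eq_cexp p L A a hp0 (fun l => hm l a)]
    _ = ∑ ω, p ω * m (L ω) a := hbalance (m · a)

theorem stmt_9 {Ω 𝓛 𝓐 : Type*} [Fintype Ω]
    (p : Ω → ℝ) (hp0 : ∀ ω, 0 ≤ p ω) (hp1 : ∑ ω, p ω = 1)
    (L : Ω → 𝓛) (A : Ω → 𝓐) (Y : Ω → ℝ)
    (π : 𝓐 → 𝓛 → ℝ) (hπpos : ∀ a l, 0 < π a l)
    (hπ : ∀ a l, (∑ ω, if L ω = l then p ω else 0) * π a l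
        = ∑ ω, if L ω = l ∧ A ω = a then p ω else 0)
    (m : 𝓛 → 𝓐 → ℝ)
    (hm : ∀ l a, 0 < (∑ ω, if L ω = l ∧ A ω = a then p ω else 0) →
      m l a = cexp p Y (fun ω => L ω = l ∧ A ω = a))
    (Qt : 𝓛 → 𝓐 → ℝ) :
    ∀ a : 𝓐,
      ∑ ω, p ω * ((if A ω = a then 1 else 0) / π a (L ω) * Y ω
        + (1 - (if A ω = a then 1 else 0) / π a (L ω)) * Qt (L ω) a)
      = ∑ ω, p ω * m (L ω) a :=
  stmt_9_general p hp0 L A Y π hπpos hπ m hm Qt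
end

section
/- Double robustness of the AIPW functional (finite version, correct outcome model): with finite probability space, treatment A, an arbitrary 'working propensity' π̃(a|ℓ) > 0 (not necessarily the true conditional probability), and the true outcome function m(ℓ,a) = E[Y | L = ℓ, A = a], the augmented estimator satisfies E[ 1{A = a}/π̃(a|L) · Y + (1 − 1{A = a}/π̃(a|L)) · m(L, a) ] = E[ m(L, a) ] for every fixed a. -/
/-!
Write the AIPW integrand as `m(L, a) + 1{A = a} / π̃(a|L) · (Y - m(L, a))`. The correction term is a
residual of the conditional mean weighted by a function of `L`; summing it over each fibre
`{L = ℓ}` gives `(1 / π̃(a|ℓ)) · (E[Y; L = ℓ, A = a] - m(ℓ, a) P(L = ℓ, A = a))`, which vanishes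
because `m` is the conditional mean (and trivially on fibres of probability zero).
-/

open scoped Classical

open Finset

section ConditionalMean

variable {Ω : Type*} [Fintype Ω] {p : Ω → ℝ}

lemma sum_ite_mul_eq_cexp_mul_sum_ite (hp0 : ∀ ω, 0 ≤ p ω) (f : Ω → ℝ) (E : Ω → Prop)
    [DecidablePred E] {c : ℝ}
    (hc : 0 < (∑ ω, if E ω then p ω else 0) → c = cexp p f E) :
    (∑ ω, if E ω then p ω * f ω else 0) = c * ∑ ω, if E ω then p ω else 0 := by
  have hterm_nonneg : ∀ ω ∈ univ, 0 ≤ if E ω then p ω else 0 := fun ω _ => by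
    split_ifs
    exacts [hp0 ω, le_rfl]
  rcases (sum_nonneg hterm_nonneg).eq_or_lt with hnull | hpos
  · have hvanish := (sum_eq_zero_iff_of_nonneg hterm_nonneg).mp hnull.symm
    rw [← hnull, mul_zero]
    refine sum_eq_zero fun ω hω => ?_
    have := hvanish ω hω
    split_ifs at this ⊢ with hE
    · rw [this, zero_mul]
    · rfl
  · have hcexp : cexp p f E
        = (∑ ω, if E ω then p ω * f ω else 0) / ∑ ω, if E ω then p ω else 0 := by
      unfold cexp
      congr!
    rw [hc hpos, hcexp, div_mul_cancel₀ _ hpos.ne']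

lemma sum_ite_mul_residual_eq_zero {𝓛 : Type*} (hp0 : ∀ ω, 0 ≤ p ω) (L : Ω → 𝓛)
    (E : Ω → Prop) (Y : Ω → ℝ) (g μ : 𝓛 → ℝ)
    (hμ : ∀ l, 0 < (∑ ω, if L ω = l ∧ E ω then p ω else 0) →
      μ l = cexp p Y (fun ω => L ω = l ∧ E ω)) :
    (∑ ω, if E ω then g (L ω) * (p ω * (Y ω - μ (L ω))) else 0) = 0 := by
  rw [← sum_fiberwise_of_maps_to (fun ω _ => mem_image_of_mem L (mem_univ ω))]
  refine sum_eq_zero fun l _ => ?_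
  have hfibre : (∑ ω ∈ univ with L ω = l, if E ω then g (L ω) * (p ω * (Y ω - μ (L ω))) else 0)
      = g l * ((∑ ω, if L ω = l ∧ E ω then p ω * Y ω else 0)
        - μ l * ∑ ω, if L ω = l ∧ E ω then p ω else 0) := by
    rw [sum_filter, mul_sum, ← sum_sub_distrib, mul_sum]
    refine sum_congr rfl fun ω _ => ?_
    by_cases hL : L ω = l
    · subst hL
      by_cases hE : E ω <;> simp only [hE, and_self, and_false, if_true, if_false] <;> ring
    · simp [hL]
  have hmean := sum_ite_mul_eq_cexp_mul_sum_ite hp0 Y (fun ω => L ω = l ∧ E ω) (hμ l)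
  beta_reduce at hmean
  rw [hfibre, hmean, sub_self, mul_zero]

end ConditionalMean

theorem stmt_10_general {Ω 𝓛 𝓐 : Type*} [Fintype Ω]
    (p : Ω → ℝ) (hp0 : ∀ ω, 0 ≤ p ω)
    (L : Ω → 𝓛) (A : Ω → 𝓐) (Y : Ω → ℝ)
    (πt : 𝓐 → 𝓛 → ℝ) (hπt : ∀ a l, 0 < πt a l)
    (m : 𝓛 → 𝓐 → ℝ)
    (hm : ∀ l a, 0 < (∑ ω, if L ω = l ∧ A ω = a then p ω else 0) →
      m l a = cexp p Y (fun ω => L ω = l ∧ A ω = a)) :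
    ∀ a : 𝓐,
      ∑ ω, p ω * ((if A ω = a then 1 else 0) / πt a (L ω) * Y ω
        + (1 - (if A ω = a then 1 else 0) / πt a (L ω)) * m (L ω) a)
      = ∑ ω, p ω * m (L ω) a := by
  intro a
  have hsplit : ∀ ω, p ω * ((if A ω = a then 1 else 0) / πt a (L ω) * Y ω
        + (1 - (if A ω = a then 1 else 0) / πt a (L ω)) * m (L ω) a)
      = (if A ω = a then (πt a (L ω))⁻¹ * (p ω * (Y ω - m (L ω) a)) else 0)
        + p ω * m (L ω) a := fun ω => by
    have := (hπt a (L ω)).ne'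
    split_ifs <;> field_simp <;> ring
  rw [sum_congr rfl fun ω _ => hsplit ω, sum_add_distrib,
    sum_ite_mul_residual_eq_zero hp0 L (A · = a) Y (fun l => (πt a l)⁻¹) (m · a) (hm · a),
    zero_add]

theorem stmt_10 {Ω 𝓛 𝓐 : Type*} [Fintype Ω]
    (p : Ω → ℝ) (hp0 : ∀ ω, 0 ≤ p ω) (hp1 : ∑ ω, p ω = 1)
    (L : Ω → 𝓛) (A : Ω → 𝓐) (Y : Ω → ℝ)
    (πt : 𝓐 → 𝓛 → ℝ) (hπt : ∀ a l, 0 < πt a l)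
    (m : 𝓛 → 𝓐 → ℝ)
    (hm : ∀ l a, 0 < (∑ ω, if L ω = l ∧ A ω = a then p ω else 0) →
      m l a = cexp p Y (fun ω => L ω = l ∧ A ω = a)) :
    ∀ a : 𝓐,
      ∑ ω, p ω * ((if A ω = a then 1 else 0) / πt a (L ω) * Y ω
        + (1 - (if A ω = a then 1 else 0) / πt a (L ω)) * m (L ω) a)
      = ∑ ω, p ω * m (L ω) a :=
  stmt_10_general p hp0 L A Y πt hπt m hm
end
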